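/- arXiv:2002.08695 — 5 statements merged into one kernel-verified Lean document; each statement's English description precedes it below -/
import Mathlib

section
/- Let I, J ≥ 1 be integers, let μ ∈ ℝ^I be a probability vector with all entries strictly positive, let C ∈ ℝ^{I×J} be a cost matrix, and let ε > 0. Assume the normalizing constant Z := Σ_{i=1}^I exp(−C_{ij}/ε) does not depend on j, and define the transition kernel κ_{ij} = exp(−C_{ij}/ε)/Z. For a probability vector ν ∈ ℝ^J define the log-likelihood L(ν) = Σ_{i=1}^I μ_i log(Σ_{j=1}^J κ_{ij} ν_j) and the entropic optimal transport cost OT_ε(μ,ν) = min over matrices π ∈ ℝ^{I×J} with nonnegative entries, row sums (Σ_j π_{ij}) = μ_i and column sums (Σ_i π_{ij}) = ν_j, of Σ_{i,j} C_{ij} π_{ij} + ε KL(π, μ⊗ν), where (μ⊗ν)_{ij} = μ_i ν_j. Then a probability vector ν̂ ∈ ℝ^J maximizes L over the probability simplex if and only if ν̂ minimizes ν ↦ OT_ε(μ,ν) over the probability simplex. -/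
open Real BigOperators Finset

/-- Kullback–Leibler divergence between two matrices (nonnegative arrays indexed by
`Fin I × Fin J`), with the convention `0 log 0 = 0`. -/
noncomputable def KLmat {I J : ℕ} (p q : Fin I → Fin J → ℝ) : ℝ :=
  ∑ i, ∑ j, p i j * Real.log (p i j / q i j)

/-- The entropic optimal transport cost between `μ` and `ν` for cost matrix `C` and
regularization `ε`: infimum over couplings `π` of `⟨C, π⟩ + ε KL(π, μ ⊗ ν)`. -/
noncomputable def OTeps {I J : ℕ} (C : Fin I → Fin J → ℝ) (ε : ℝ)
    (μ : Fin I → ℝ) (ν : Fin J → ℝ) : ℝ :=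
  sInf {v : ℝ | ∃ plan : Fin I → Fin J → ℝ,
    (∀ i j, 0 ≤ plan i j) ∧ (∀ i, ∑ j, plan i j = μ i) ∧ (∀ j, ∑ i, plan i j = ν j) ∧
    v = ∑ i, ∑ j, C i j * plan i j + ε * KLmat plan (fun i j => μ i * ν j)}

/-!
Writing `C = -ε (log κ + log Z)` and `q(ν)ᵢⱼ = μᵢ κᵢⱼ νⱼ / (κν)ᵢ` (the posterior coupling), the
entropic cost of any coupling `π` of `μ` and `ν` equals `ε (KL(π, q(ν)) - L(ν) - log Z)`.
By Gibbs' inequality, `OT_ε(μ, ν) ≥ -ε (L(ν) + log Z)`. At a maximizer `ν` of `L` on the simplex,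
the first-order conditions `∂ⱼL(ν) ≤ ⟨∇L(ν), ν⟩ = 1` force the second marginal of `q(ν)` to be
`ν`, so `q(ν)` is admissible and the bound is attained. Since maximizers exist by compactness,
`OT_ε(μ, ·)` and `-ε (L + log Z)` then have the same minimizers.
-/

theorem Real.sub_le_mul_log_div {p q : ℝ} (hp : 0 ≤ p) (hq : 0 ≤ q) (hpq : 0 < p → 0 < q) :
    p - q ≤ p * log (p / q) := by
  rcases hp.eq_or_lt with rfl | hp
  · simpa using hq
  · have := one_sub_inv_le_log_of_pos (div_pos hp (hpq hp))
    rw [inv_div] at this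
    calc p - q = p * (1 - q / p) := by field_simp
      _ ≤ p * log (p / q) := mul_le_mul_of_nonneg_left this hp.le

theorem KLmat_nonneg {I J : ℕ} {p q : Fin I → Fin J → ℝ} (hp : ∀ i j, 0 ≤ p i j)
    (hq : ∀ i j, 0 ≤ q i j) (hpq : ∀ i j, 0 < p i j → 0 < q i j)
    (hsum : ∑ i, ∑ j, p i j = ∑ i, ∑ j, q i j) : 0 ≤ KLmat p q :=
  calc 0 = ∑ i, ∑ j, (p i j - q i j) := by simp [sum_sub_distrib, hsum]
    _ ≤ KLmat p q := sum_le_sum fun i _ ↦ sum_le_sum fun j _ ↦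
      sub_le_mul_log_div (hp i j) (hq i j) (hpq i j)

@[simp]
theorem KLmat_self {I J : ℕ} (p : Fin I → Fin J → ℝ) : KLmat p p = 0 := by
  simp [KLmat]

theorem IsMaxOn.hasFDerivAt_single_le {γ : Type*} [Fintype γ] [DecidableEq γ]
    {f : (γ → ℝ) → ℝ} {f' : (γ → ℝ) →L[ℝ] ℝ} {a : γ → ℝ} (h : IsMaxOn f (stdSimplex ℝ γ) a)
    (ha : a ∈ stdSimplex ℝ γ) (hf : HasFDerivAt f f' a) (j : γ) : f' (Pi.single j 1) ≤ f' a := by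
  have hseg := (convex_stdSimplex ℝ γ).segment_subset ha (single_mem_stdSimplex ℝ j)
  have := h.localize.hasFDerivWithinAt_nonpos hf.hasFDerivWithinAt
    (sub_mem_posTangentConeAt_of_segment_subset hseg)
  rwa [map_sub, sub_nonpos] at this

theorem isMinOn_iff_isMaxOn_of_le_of_eq {α : Type*} {s : Set α} {f L : α → ℝ} {φ : ℝ → ℝ}
    (hφ : StrictAnti φ) (hle : ∀ x ∈ s, φ (L x) ≤ f x)
    (heq : ∀ x ∈ s, IsMaxOn L s x → f x = φ (L x)) (hex : ∃ x ∈ s, IsMaxOn L s x)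
    {a : α} (ha : a ∈ s) : IsMinOn f s a ↔ IsMaxOn L s a := by
  obtain ⟨b, hb, hbmax⟩ := hex
  refine ⟨fun hmin x hx ↦ ?_, fun hmax x hx ↦ ?_⟩
  · have : φ (L a) ≤ φ (L b) := (hle a ha).trans ((hmin hb).trans (heq b hb hbmax).le)
    exact (hbmax hx).trans (hφ.le_iff_ge.mp this)
  · calc f a = φ (L a) := heq a ha hmax
      _ ≤ φ (L x) := hφ.antitone (hmax hx)
      _ ≤ f x := hle x hx

section LogLikelihood

variable {ι γ : Type*} [Fintype γ]

noncomputable def logLikelihood [Fintype ι] (μ : ι → ℝ) (κ : ι → γ → ℝ) (ν : γ → ℝ) : ℝ :=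
  ∑ i, μ i * log (∑ j, κ i j * ν j)

noncomputable def posteriorCoupling (μ : ι → ℝ) (κ : ι → γ → ℝ) (ν : γ → ℝ) (i : ι) (j : γ) : ℝ :=
  μ i * κ i j * ν j / ∑ j', κ i j' * ν j'

theorem sum_mul_pos_of_mem_stdSimplex {a ν : γ → ℝ} (ha : ∀ j, 0 < a j)
    (hν : ν ∈ stdSimplex ℝ γ) : 0 < ∑ j, a j * ν j := by
  obtain ⟨j, hj⟩ : ∃ j, 0 < ν j := by
    by_contra! h
    have := sum_nonpos fun j (_ : j ∈ univ) ↦ h j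
    linarith [hν.2]
  exact sum_pos' (fun j _ ↦ mul_nonneg (ha j).le (hν.1 j)) ⟨j, mem_univ j, mul_pos (ha j) hj⟩

variable {μ : ι → ℝ} {κ : ι → γ → ℝ} {ν : γ → ℝ}

theorem posteriorCoupling_nonneg (hμ : ∀ i, 0 ≤ μ i) (hκ : ∀ i j, 0 ≤ κ i j) (hν : ∀ j, 0 ≤ ν j)
    (i : ι) (j : γ) : 0 ≤ posteriorCoupling μ κ ν i j :=
  div_nonneg (mul_nonneg (mul_nonneg (hμ i) (hκ i j)) (hν j))
    (sum_nonneg fun j _ ↦ mul_nonneg (hκ i j) (hν j))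

theorem posteriorCoupling_pos {i : ι} {j : γ} (hμ : 0 < μ i) (hκ : 0 < κ i j) (hν : 0 < ν j)
    (hr : 0 < ∑ j', κ i j' * ν j') : 0 < posteriorCoupling μ κ ν i j :=
  div_pos (mul_pos (mul_pos hμ hκ) hν) hr

theorem sum_posteriorCoupling_right (hr : ∀ i, ∑ j, κ i j * ν j ≠ 0) (i : ι) :
    ∑ j, posteriorCoupling μ κ ν i j = μ i := by
  simp only [posteriorCoupling, mul_assoc, ← sum_div, ← mul_sum]
  exact mul_div_cancel_right₀ _ (hr i)

theorem hasFDerivAt_logLikelihood [Fintype ι] (hr : ∀ i, ∑ j, κ i j * ν j ≠ 0) :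
    HasFDerivAt (logLikelihood μ κ)
      (∑ i, μ i • (∑ j, κ i j * ν j)⁻¹ •
        ∑ j, κ i j • (ContinuousLinearMap.proj j : (γ → ℝ) →L[ℝ] ℝ)) ν :=
  HasFDerivAt.fun_sum fun i _ ↦ ((HasFDerivAt.fun_sum fun j _ ↦
    (hasFDerivAt_apply j ν).const_mul (κ i j)).log (hr i)).const_mul (μ i)

theorem exists_isMaxOn_logLikelihood [Fintype ι] [Nonempty γ] (hκ : ∀ i j, 0 < κ i j) :
    ∃ ν ∈ stdSimplex ℝ γ, IsMaxOn (logLikelihood μ κ) (stdSimplex ℝ γ) ν := by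
  classical
  refine isCompact_stdSimplex ℝ γ |>.exists_isMaxOn
    ⟨_, single_mem_stdSimplex ℝ (Classical.arbitrary γ)⟩ fun ν hν ↦ ?_
  exact (hasFDerivAt_logLikelihood fun i ↦
    (sum_mul_pos_of_mem_stdSimplex (hκ i) hν).ne').continuousAt.continuousWithinAt

theorem sum_posteriorCoupling_left_of_isMaxOn [Fintype ι] (hμ : ∑ i, μ i = 1)
    (hκ : ∀ i j, 0 < κ i j) (hν : ν ∈ stdSimplex ℝ γ)
    (hmax : IsMaxOn (logLikelihood μ κ) (stdSimplex ℝ γ) ν) (j : γ) :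
    ∑ i, posteriorCoupling μ κ ν i j = ν j := by
  classical
  have hr i := (sum_mul_pos_of_mem_stdSimplex (hκ i) hν).ne'
  set grad : γ → ℝ := fun j ↦ ∑ i, μ i * (κ i j / ∑ j', κ i j' * ν j')
  have hg : ∀ j, grad j ≤ 1 := fun j ↦ by
    have := hmax.hasFDerivAt_single_le hν (hasFDerivAt_logLikelihood hr) j
    simpa [Pi.single_apply, hr, hμ, grad, div_eq_inv_mul] using this
  have hcol : ∀ j, ∑ i, posteriorCoupling μ κ ν i j = ν j * grad j := fun j ↦ by
    simp only [posteriorCoupling, grad, mul_sum]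
    exact sum_congr rfl fun i _ ↦ by ring
  have hsum : ∑ j, ν j * (1 - grad j) = 0 := by
    simp only [mul_sub, mul_one, sum_sub_distrib, ← hcol, sum_comm (γ := γ),
      sum_posteriorCoupling_right hr, hμ, hν.2, sub_self]
  have hzero := (sum_eq_zero_iff_of_nonneg fun j _ ↦
    mul_nonneg (hν.1 j) (sub_nonneg.2 (hg j))).1 hsum j (mem_univ j)
  rw [hcol]
  linarith

end LogLikelihood

noncomputable def gibbsKernel {ι γ : Type*} [Fintype ι] (C : ι → γ → ℝ) (ε : ℝ) (i : ι) (j : γ) :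
    ℝ :=
  exp (-C i j / ε) / ∑ i', exp (-C i' j / ε)

theorem gibbsKernel_pos {ι γ : Type*} [Fintype ι] [Nonempty ι] (C : ι → γ → ℝ) (ε : ℝ)
    (i : ι) (j : γ) : 0 < gibbsKernel C ε i j :=
  div_pos (exp_pos _) (sum_pos (fun _ _ ↦ exp_pos _) univ_nonempty)

theorem eq_neg_mul_log_gibbsKernel {ι γ : Type*} [Fintype ι] [Nonempty ι] {C : ι → γ → ℝ}
    {ε : ℝ} (hε : ε ≠ 0) {j₀ : γ}
    (hZ : ∀ j, ∑ i, exp (-C i j / ε) = ∑ i, exp (-C i j₀ / ε)) (i : ι) (j : γ) :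
    C i j = -ε * (log (gibbsKernel C ε i j) + log (∑ i', exp (-C i' j₀ / ε))) := by
  have hZpos : 0 < ∑ i', exp (-C i' j₀ / ε) := sum_pos (fun _ _ ↦ exp_pos _) univ_nonempty
  rw [gibbsKernel, hZ, log_div (exp_pos _).ne' hZpos.ne', log_exp]
  field_simp
  ring

section EntropicTransport

variable {I J : ℕ} {μ : Fin I → ℝ} {κ C P : Fin I → Fin J → ℝ} {ν : Fin J → ℝ} {ε c : ℝ}

theorem log_div_posteriorCoupling {i : Fin I} {j : Fin J} {x : ℝ} (hx : x ≠ 0)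
    (hμ : μ i ≠ 0) (hκ : κ i j ≠ 0) (hν : ν j ≠ 0) (hr : ∑ j', κ i j' * ν j' ≠ 0) :
    log (x / posteriorCoupling μ κ ν i j) =
      log (x / (μ i * ν j)) - log (κ i j) + log (∑ j', κ i j' * ν j') := by
  have : x / posteriorCoupling μ κ ν i j = x / (μ i * ν j) / κ i j * ∑ j', κ i j' * ν j' := by
    rw [posteriorCoupling]
    field_simp
  rw [this, log_mul (by positivity) hr, log_div (by positivity) hκ]

theorem cost_add_KLmat_eq (hμ : ∀ i, 0 < μ i) (hμ1 : ∑ i, μ i = 1) (hκ : ∀ i j, 0 < κ i j)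
    (hC : ∀ i j, C i j = -ε * (log (κ i j) + c)) (hν : ν ∈ stdSimplex ℝ (Fin J))
    (hP : ∀ i j, 0 ≤ P i j) (hrow : ∀ i, ∑ j, P i j = μ i) (hcol : ∀ j, ∑ i, P i j = ν j) :
    ∑ i, ∑ j, C i j * P i j + ε * KLmat P (fun i j ↦ μ i * ν j) =
      ε * (KLmat P (posteriorCoupling μ κ ν) - (logLikelihood μ κ ν + c)) := by
  have hr i := (sum_mul_pos_of_mem_stdSimplex (hκ i) hν).ne'
  have hterm : ∀ i j, C i j * P i j + ε * (P i j * log (P i j / (μ i * ν j))) =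
      ε * (P i j * log (P i j / posteriorCoupling μ κ ν i j) -
        P i j * (log (∑ j', κ i j' * ν j') + c)) := fun i j ↦ by
    rcases (hP i j).eq_or_lt with hP0 | hP0
    · simp [← hP0]
    have hνj : 0 < ν j := hcol j ▸ sum_pos' (fun i _ ↦ hP i j) ⟨i, mem_univ i, hP0⟩
    rw [log_div_posteriorCoupling hP0.ne' (hμ i).ne' (hκ i j).ne' hνj.ne' (hr i), hC]
    ring
  calc ∑ i, ∑ j, C i j * P i j + ε * KLmat P (fun i j ↦ μ i * ν j)
      = ∑ i, ∑ j, ε * (P i j * log (P i j / posteriorCoupling μ κ ν i j) -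
          P i j * (log (∑ j', κ i j' * ν j') + c)) := by
        simp only [KLmat, mul_sum, ← sum_add_distrib, hterm]
    _ = ε * (KLmat P (posteriorCoupling μ κ ν) - ∑ i, μ i * (log (∑ j, κ i j * ν j) + c)) := by
        simp only [KLmat, ← mul_sum, sum_sub_distrib, ← sum_mul, hrow]
    _ = ε * (KLmat P (posteriorCoupling μ κ ν) - (logLikelihood μ κ ν + c)) := by
        simp only [logLikelihood, mul_add, sum_add_distrib, ← sum_mul, hμ1, one_mul]

theorem neg_mul_logLikelihood_le_cost (hε : 0 ≤ ε) (hμ : ∀ i, 0 < μ i) (hμ1 : ∑ i, μ i = 1)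
    (hκ : ∀ i j, 0 < κ i j) (hC : ∀ i j, C i j = -ε * (log (κ i j) + c))
    (hν : ν ∈ stdSimplex ℝ (Fin J)) (hP : ∀ i j, 0 ≤ P i j) (hrow : ∀ i, ∑ j, P i j = μ i)
    (hcol : ∀ j, ∑ i, P i j = ν j) :
    -ε * (logLikelihood μ κ ν + c) ≤
      ∑ i, ∑ j, C i j * P i j + ε * KLmat P (fun i j ↦ μ i * ν j) := by
  have hr i := sum_mul_pos_of_mem_stdSimplex (hκ i) hν
  have hKL : 0 ≤ KLmat P (posteriorCoupling μ κ ν) := by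
    refine KLmat_nonneg hP (fun i j ↦ ?_) (fun i j hPij ↦ ?_) ?_
    · exact posteriorCoupling_nonneg (fun i ↦ (hμ i).le) (fun i j ↦ (hκ i j).le) hν.1 i j
    · exact posteriorCoupling_pos (hμ i) (hκ i j)
        (hcol j ▸ sum_pos' (fun i _ ↦ hP i j) ⟨i, mem_univ i, hPij⟩) (hr i)
    · simp only [hrow, sum_posteriorCoupling_right fun i ↦ (hr i).ne']
  rw [cost_add_KLmat_eq hμ hμ1 hκ hC hν hP hrow hcol]
  linarith [mul_nonneg hε hKL]

theorem neg_mul_logLikelihood_le_OTeps (hε : 0 ≤ ε) (hμ : ∀ i, 0 < μ i) (hμ1 : ∑ i, μ i = 1)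
    (hκ : ∀ i j, 0 < κ i j) (hC : ∀ i j, C i j = -ε * (log (κ i j) + c))
    (hν : ν ∈ stdSimplex ℝ (Fin J)) :
    -ε * (logLikelihood μ κ ν + c) ≤ OTeps C ε μ ν := by
  refine le_csInf ⟨_, fun i j ↦ μ i * ν j, fun i j ↦ mul_nonneg (hμ i).le (hν.1 j),
    fun i ↦ by rw [← mul_sum, hν.2, mul_one], fun j ↦ by rw [← sum_mul, hμ1, one_mul], rfl⟩ ?_
  rintro _ ⟨P, hP, hrow, hcol, rfl⟩
  exact neg_mul_logLikelihood_le_cost hε hμ hμ1 hκ hC hν hP hrow hcol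

theorem OTeps_eq_of_isMaxOn (hε : 0 ≤ ε) (hμ : ∀ i, 0 < μ i) (hμ1 : ∑ i, μ i = 1)
    (hκ : ∀ i j, 0 < κ i j) (hC : ∀ i j, C i j = -ε * (log (κ i j) + c))
    (hν : ν ∈ stdSimplex ℝ (Fin J))
    (hmax : IsMaxOn (logLikelihood μ κ) (stdSimplex ℝ (Fin J)) ν) :
    OTeps C ε μ ν = -ε * (logLikelihood μ κ ν + c) := by
  have hr i := (sum_mul_pos_of_mem_stdSimplex (hκ i) hν).ne'
  have hq := posteriorCoupling_nonneg (fun i ↦ (hμ i).le) (fun i j ↦ (hκ i j).le) hν.1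
  have hrow := sum_posteriorCoupling_right (μ := μ) hr
  have hcol := sum_posteriorCoupling_left_of_isMaxOn hμ1 hκ hν hmax
  refine le_antisymm (csInf_le ⟨-ε * (logLikelihood μ κ ν + c), ?_⟩
    ⟨posteriorCoupling μ κ ν, hq, hrow, hcol, ?_⟩)
    (neg_mul_logLikelihood_le_OTeps hε hμ hμ1 hκ hC hν)
  · rintro _ ⟨P, hP, hProw, hPcol, rfl⟩
    exact neg_mul_logLikelihood_le_cost hε hμ hμ1 hκ hC hν hP hProw hPcol
  · rw [cost_add_KLmat_eq hμ hμ1 hκ hC hν hq hrow hcol, KLmat_self]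
    ring

end EntropicTransport

/-- **MLE interpretation.** A probability vector maximizes the log-likelihood
for the kernel inversion problem with kernel `κ_{ij} = exp(−C_{ij}/ε)/Z` iff it minimizes
`ν ↦ OT_ε(μ, ν)` over the probability simplex. -/
theorem mle_iff_min_entropic_ot (I J : ℕ) (hI : 1 ≤ I) (hJ : 1 ≤ J)
    (μ : Fin I → ℝ) (hμpos : ∀ i, 0 < μ i) (hμsum : ∑ i, μ i = 1)
    (C : Fin I → Fin J → ℝ) (ε : ℝ) (hε : 0 < ε)
    (hZ : ∀ j j' : Fin J, ∑ i, Real.exp (-C i j / ε) = ∑ i, Real.exp (-C i j' / ε)) :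
    let κ : Fin I → Fin J → ℝ :=
      fun i j => Real.exp (-C i j / ε) / ∑ i', Real.exp (-C i' j / ε)
    let L : (Fin J → ℝ) → ℝ := fun ν => ∑ i, μ i * Real.log (∑ j, κ i j * ν j)
    ∀ νhat : Fin J → ℝ, (∀ j, 0 ≤ νhat j) → ∑ j, νhat j = 1 →
      ((∀ ν : Fin J → ℝ, (∀ j, 0 ≤ ν j) → ∑ j, ν j = 1 → L ν ≤ L νhat) ↔
        (∀ ν : Fin J → ℝ, (∀ j, 0 ≤ ν j) → ∑ j, ν j = 1 →
          OTeps C ε μ νhat ≤ OTeps C ε μ ν)) := by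
  intro κ L νhat hνhat0 hνhat1
  have : Nonempty (Fin I) := ⟨⟨0, hI⟩⟩
  have : Nonempty (Fin J) := ⟨⟨0, hJ⟩⟩
  have hκ : ∀ i j, 0 < κ i j := gibbsKernel_pos C ε
  have hC := eq_neg_mul_log_gibbsKernel hε.ne' fun j ↦ hZ j ⟨0, hJ⟩
  have hφ : StrictAnti fun t ↦ -ε * (t + log (∑ i, exp (-C i ⟨0, hJ⟩ / ε))) :=
    fun s t hst ↦ by nlinarith
  have key := isMinOn_iff_isMaxOn_of_le_of_eq (f := OTeps C ε μ) (L := L) hφ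
    (fun ν hν ↦ neg_mul_logLikelihood_le_OTeps hε.le hμpos hμsum hκ hC hν)
    (fun ν hν hmax ↦ OTeps_eq_of_isMaxOn hε.le hμpos hμsum hκ hC hν hmax)
    (exists_isMaxOn_logLikelihood hκ) ⟨hνhat0, hνhat1⟩
  simpa only [isMinOn_iff, isMaxOn_iff, stdSimplex, Set.mem_ofPred_eq, and_imp] using key.symm
end

section
/- Let I, J ≥ 1 be integers, let μ ∈ ℝ^I and β ∈ ℝ^J be probability vectors with all entries strictly positive, let C ∈ ℝ^{I×J}, and let ε > 0, η > ε. Define F(a,b) = Σ_i μ_i a_i − ε Σ_{i,j} μ_i β_j exp((a_i + b_j − C_{ij})/ε) − (η−ε) log(Σ_j β_j exp(−b_j/(η−ε))) for (a,b) ∈ ℝ^I × ℝ^J. Then F attains its supremum: there exists (a*,b*) ∈ ℝ^I × ℝ^J with F(a*,b*) ≥ F(a,b) for all (a,b). -/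
open Real BigOperators Finset

/-- The dual objective of the regularized Wasserstein estimator problem. -/
noncomputable def Fobj {I J : ℕ} (μ : Fin I → ℝ) (β : Fin J → ℝ)
    (C : Fin I → Fin J → ℝ) (ε η : ℝ) (a : Fin I → ℝ) (b : Fin J → ℝ) : ℝ :=
  ∑ i, μ i * a i - ε * ∑ i, ∑ j, μ i * β j * Real.exp ((a i + b j - C i j) / ε)
    - (η - ε) * Real.log (∑ j, β j * Real.exp (-b j / (η - ε)))

/-! With `δ = η - ε`, the log-sum-exp term is at most `b j - δ log β j` for every `j`, and
`∑ μ i = 1` lets `b j` enter the linear term, so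
`F a b ≤ ∑ i, μ i * ψᵢⱼ (a i + b j) - δ log β j` with `ψᵢⱼ u = u - ε β j exp ((u - C i j) / ε)`.
Each `ψᵢⱼ` tends to `-∞` at `±∞`, so all sums `a i + b j` are bounded on a superlevel set of `F`.
Since `F` is invariant under `(a, b) ↦ (a + c, b - c)`, one may normalize `b j₀ = 0`; the
normalized superlevel set is then compact, and a maximizer of `F` on it is a global maximizer. -/

open Filter Bornology Metric

lemma tendsto_sub_mul_exp_cocompact {κ ε : ℝ} (hκ : 0 < κ) (hε : 0 < ε) (c : ℝ) :
    Tendsto (fun u => u - κ * exp ((u - c) / ε)) (cocompact ℝ) atBot := by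
  rw [cocompact_eq_atBot_atTop, tendsto_sup]
  constructor
  · exact tendsto_atBot_mono (fun u => sub_le_self _ (by positivity)) tendsto_id
  · have hl : 0 < 2 * ε / κ := by positivity
    -- tangent line of `u ↦ κ * exp ((u - c) / ε)` of slope `2`
    have hle : ∀ u, u - κ * exp ((u - c) / ε) ≤ -u + 2 * (c - ε * (1 - log (2 * ε / κ))) := by
      intro u
      have h := add_one_le_exp ((u - c) / ε - log (2 * ε / κ))
      rw [exp_sub, exp_log hl, le_div_iff₀ hl] at h
      have htangent : 2 * (u - c) + 2 * ε * (1 - log (2 * ε / κ)) ≤ κ * exp ((u - c) / ε) :=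
        calc _ = κ * (((u - c) / ε - log (2 * ε / κ) + 1) * (2 * ε / κ)) := by field_simp; ring
          _ ≤ κ * exp ((u - c) / ε) := by gcongr
      linarith
    exact tendsto_atBot_mono hle (tendsto_atBot_add_const_right _ _ tendsto_neg_atTop_atBot)

lemma tendsto_sum_mul_comp_eval_cocompact {ι : Type*} [Fintype ι] {w : ι → ℝ}
    (hw : ∀ i, 0 < w i) {f : ι → ℝ → ℝ} (hf : ∀ i, Continuous (f i))
    (hf_lim : ∀ i, Tendsto (f i) (cocompact ℝ) atBot) :
    Tendsto (fun x : ι → ℝ => ∑ i, w i * f i (x i)) (cocompact (ι → ℝ)) atBot := by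
  classical
  choose M hM using fun i => (hf i).exists_forall_ge (hf_lim i)
  rw [← coprodᵢ_cocompact, Filter.coprodᵢ, tendsto_iSup]
  intro i
  have hle : ∀ x : ι → ℝ,
      ∑ k, w k * f k (x k) ≤ w i * f i (x i) + ∑ k ∈ univ.erase i, w k * f k (M k) := by
    intro x
    rw [← add_sum_erase _ _ (mem_univ i)]
    gcongr with k
    exacts [(hw k).le, hM k _]
  exact tendsto_atBot_mono hle (tendsto_atBot_add_const_right _ _
    (((hf_lim i).const_mul_atBot (hw i)).comp tendsto_comap))

lemma isBounded_setOf_le_of_tendsto_cocompact {X : Type*} [PseudoMetricSpace X] {f : X → ℝ}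
    (hf : Tendsto f (cocompact X) atBot) (c : ℝ) : IsBounded {x | c ≤ f x} := by
  have h := (hf.mono_left cobounded_le_cocompact).eventually (eventually_lt_atBot c)
  simpa [Set.compl_ofPred] using isBounded_compl_iff.2 h

lemma neg_mul_log_sum_mul_exp_le {ι : Type*} [Fintype ι] {w : ι → ℝ} (hw : ∀ k, 0 ≤ w k)
    (x : ι → ℝ) {δ : ℝ} (hδ : 0 < δ) {j : ι} (hj : 0 < w j) :
    -(δ * log (∑ k, w k * exp (-x k / δ))) ≤ x j - δ * log (w j) := by
  have hterm : w j * exp (-x j / δ) ≤ ∑ k, w k * exp (-x k / δ) :=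
    single_le_sum (f := fun k => w k * exp (-x k / δ)) (fun k _ => by have := hw k; positivity)
      (mem_univ j)
  have hlog := log_le_log (by positivity) hterm
  rw [log_mul hj.ne' (exp_pos _).ne', log_exp] at hlog
  have : δ * (-x j / δ) = -x j := by field_simp
  nlinarith

section Fobj

variable {I J : ℕ} {μ : Fin I → ℝ} {β : Fin J → ℝ} (C : Fin I → Fin J → ℝ) {ε η : ℝ}

lemma continuous_Fobj [Nonempty (Fin J)] (hβpos : ∀ j, 0 < β j) :
    Continuous (fun p : (Fin I → ℝ) × (Fin J → ℝ) => Fobj μ β C ε η p.1 p.2) := by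
  unfold Fobj
  fun_prop (disch := exact fun p =>
    (sum_pos (fun j _ => mul_pos (hβpos j) (exp_pos _)) univ_nonempty).ne')

lemma Fobj_add_const_sub_const [Nonempty (Fin J)] (hμsum : ∑ i, μ i = 1)
    (hβpos : ∀ j, 0 < β j) (hεη : ε ≠ η) (c : ℝ) (a : Fin I → ℝ) (b : Fin J → ℝ) :
    Fobj μ β C ε η (fun i => a i + c) (fun j => b j - c) = Fobj μ β C ε η a b := by
  have hδ : η - ε ≠ 0 := sub_ne_zero.2 hεη.symm
  have hlin : ∑ i, μ i * (a i + c) = ∑ i, μ i * a i + c := by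
    simp [mul_add, sum_add_distrib, ← sum_mul, hμsum]
  have hlse : ∑ j, β j * exp (-(b j - c) / (η - ε))
      = exp (c / (η - ε)) * ∑ j, β j * exp (-b j / (η - ε)) := by
    rw [mul_sum]
    refine sum_congr rfl fun j _ => ?_
    rw [show -(b j - c) / (η - ε) = c / (η - ε) + -b j / (η - ε) by ring, exp_add]
    ring
  have hpos : 0 < ∑ j, β j * exp (-b j / (η - ε)) :=
    sum_pos (fun j _ => mul_pos (hβpos j) (exp_pos _)) univ_nonempty
  simp only [Fobj, hlin, hlse, log_mul (exp_pos _).ne' hpos.ne', log_exp, add_add_sub_cancel]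
  field_simp
  ring

lemma Fobj_le_sum_sub_mul_exp (hμpos : ∀ i, 0 < μ i) (hμsum : ∑ i, μ i = 1)
    (hβpos : ∀ j, 0 < β j) (hε : 0 < ε) (hεη : ε < η) (a : Fin I → ℝ) (b : Fin J → ℝ)
    (j : Fin J) :
    Fobj μ β C ε η a b ≤ ∑ i, μ i * (a i + b j - ε * β j * exp ((a i + b j - C i j) / ε))
      - (η - ε) * log (β j) := by
  have hterm : ∑ i, μ i * β j * exp ((a i + b j - C i j) / ε)
      ≤ ∑ i, ∑ k, μ i * β k * exp ((a i + b k - C i k) / ε) :=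
    sum_le_sum fun i _ => single_le_sum (f := fun k => μ i * β k * exp ((a i + b k - C i k) / ε))
      (fun k _ => by have := hμpos i; have := hβpos k; positivity) (mem_univ j)
  have hlse := neg_mul_log_sum_mul_exp_le (fun k => (hβpos k).le) b (sub_pos.2 hεη) (hβpos j)
  have hsum : ∑ i, μ i * (a i + b j - ε * β j * exp ((a i + b j - C i j) / ε))
      = ∑ i, μ i * a i + b j - ε * ∑ i, μ i * β j * exp ((a i + b j - C i j) / ε) := by
    simp only [mul_sub, mul_add, sum_sub_distrib, sum_add_distrib, ← sum_mul, hμsum, one_mul,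
      mul_sum]
    exact congrArg _ (sum_congr rfl fun i _ => by ring)
  rw [hsum, Fobj]
  nlinarith [mul_le_mul_of_nonneg_left hterm hε.le]

lemma exists_abs_add_le_of_le_Fobj (hμpos : ∀ i, 0 < μ i) (hμsum : ∑ i, μ i = 1)
    (hβpos : ∀ j, 0 < β j) (hε : 0 < ε) (hεη : ε < η) (c : ℝ) :
    ∃ R, ∀ a b, c ≤ Fobj μ β C ε η a b → ∀ i j, |a i + b j| ≤ R := by
  have hS : ∀ j, IsBounded {x : Fin I → ℝ |
      c + (η - ε) * log (β j) ≤ ∑ i, μ i * (x i - ε * β j * exp ((x i - C i j) / ε))} :=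
    fun j => isBounded_setOf_le_of_tendsto_cocompact (tendsto_sum_mul_comp_eval_cocompact hμpos
      (fun i => by fun_prop)
      fun i => tendsto_sub_mul_exp_cocompact (mul_pos hε (hβpos j)) hε _) _
  obtain ⟨R, hR⟩ := (isBounded_iUnion.2 hS).subset_closedBall 0
  refine ⟨R, fun a b hab i j => ?_⟩
  have hmem : (fun i => a i + b j) ∈ closedBall 0 R := hR <| Set.mem_iUnion.2 ⟨j, by
    have := Fobj_le_sum_sub_mul_exp C hμpos hμsum hβpos hε hεη a b j
    show c + (η - ε) * log (β j) ≤ ∑ i, μ i * (a i + b j - ε * β j * exp ((a i + b j - C i j) / ε))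
    linarith⟩
  simpa using (norm_le_pi_norm _ i).trans (mem_closedBall_zero_iff.1 hmem)

lemma isBounded_setOf_le_Fobj [Nonempty (Fin I)] (hμpos : ∀ i, 0 < μ i) (hμsum : ∑ i, μ i = 1)
    (hβpos : ∀ j, 0 < β j) (hε : 0 < ε) (hεη : ε < η) (j₀ : Fin J) (c : ℝ) :
    IsBounded {p : (Fin I → ℝ) × (Fin J → ℝ) | p.2 j₀ = 0 ∧ c ≤ Fobj μ β C ε η p.1 p.2} := by
  obtain ⟨R, hR⟩ := exists_abs_add_le_of_le_Fobj C hμpos hμsum hβpos hε hεη c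
  have : Nonempty (Fin J) := ⟨j₀⟩
  obtain ⟨i₀⟩ := ‹Nonempty (Fin I)›
  refine ((isBounded_closedBall (x := 0) (r := R)).prod
    (isBounded_closedBall (x := 0) (r := 2 * R))).subset ?_
  rintro ⟨a, b⟩ ⟨hb : b j₀ = 0, hab⟩
  have ha : ∀ i, |a i| ≤ R := fun i => by simpa [hb] using hR a b hab i j₀
  refine ⟨mem_closedBall_zero_iff.2 ((pi_norm_le_iff_of_nonempty _).2 ha),
    mem_closedBall_zero_iff.2 ((pi_norm_le_iff_of_nonempty _).2 fun j => ?_)⟩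
  calc ‖b j‖ = |(a i₀ + b j) - a i₀| := by simp
    _ ≤ |a i₀ + b j| + |a i₀| := abs_sub _ _
    _ ≤ 2 * R := by linarith [hR a b hab i₀ j, ha i₀]

end Fobj

theorem dual_objective_attains_max_general (I J : ℕ) (hI : 1 ≤ I) (hJ : 1 ≤ J)
    (μ : Fin I → ℝ) (hμpos : ∀ i, 0 < μ i) (hμsum : ∑ i, μ i = 1)
    (β : Fin J → ℝ) (hβpos : ∀ j, 0 < β j)
    (C : Fin I → Fin J → ℝ) (ε η : ℝ) (hε : 0 < ε) (hεη : ε < η) :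
    ∃ astar : Fin I → ℝ, ∃ bstar : Fin J → ℝ,
      ∀ (a : Fin I → ℝ) (b : Fin J → ℝ), Fobj μ β C ε η a b ≤ Fobj μ β C ε η astar bstar := by
  have : Nonempty (Fin I) := ⟨⟨0, hI⟩⟩
  let j₀ : Fin J := ⟨0, hJ⟩
  have : Nonempty (Fin J) := ⟨j₀⟩
  set F := fun p : (Fin I → ℝ) × (Fin J → ℝ) => Fobj μ β C ε η p.1 p.2
  have hFcont : Continuous F := continuous_Fobj C hβpos
  have hK : IsCompact {p | p.2 j₀ = 0 ∧ F 0 ≤ F p} :=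
    isCompact_of_isClosed_isBounded
      ((isClosed_eq (by fun_prop) continuous_const).inter (isClosed_le continuous_const hFcont))
      (isBounded_setOf_le_Fobj C hμpos hμsum hβpos hε hεη j₀ _)
  obtain ⟨p, -, hp⟩ := hK.exists_isMaxOn ⟨0, rfl, le_rfl⟩ hFcont.continuousOn
  refine ⟨p.1, p.2, fun a b => ?_⟩
  rw [← Fobj_add_const_sub_const C hμsum hβpos hεη.ne (b j₀) a b]
  by_cases h : F 0 ≤ F ((fun i => a i + b j₀), fun j => b j - b j₀)
  · exact hp ⟨sub_self _, h⟩
  · exact (not_le.1 h).le.trans (hp ⟨rfl, le_rfl⟩)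

/-- The dual objective `F` attains its supremum on `ℝ^I × ℝ^J`. -/
theorem dual_objective_attains_max (I J : ℕ) (hI : 1 ≤ I) (hJ : 1 ≤ J)
    (μ : Fin I → ℝ) (hμpos : ∀ i, 0 < μ i) (hμsum : ∑ i, μ i = 1)
    (β : Fin J → ℝ) (hβpos : ∀ j, 0 < β j) (hβsum : ∑ j, β j = 1)
    (C : Fin I → Fin J → ℝ) (ε η : ℝ) (hε : 0 < ε) (hεη : ε < η) :
    ∃ astar : Fin I → ℝ, ∃ bstar : Fin J → ℝ,
      ∀ (a : Fin I → ℝ) (b : Fin J → ℝ), Fobj μ β C ε η a b ≤ Fobj μ β C ε η astar bstar :=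
  dual_objective_attains_max_general I J hI hJ μ hμpos hμsum β hβpos C ε η hε hεη
end

section
/- Let I, J ≥ 1 be integers, let μ ∈ ℝ^I and β ∈ ℝ^J be probability vectors with all entries strictly positive, let C ∈ ℝ^{I×J}, and let ε > 0, η > ε. For (a,b) ∈ ℝ^I × ℝ^J set D_{ij}(a,b) = exp((a_i + b_j − C_{ij})/ε), ν(b)_j = β_j exp(−b_j/(η−ε)) / Σ_k β_k exp(−b_k/(η−ε)), and F(a,b) = Σ_i μ_i a_i − ε Σ_{i,j} μ_i β_j D_{ij}(a,b) − (η−ε) log(Σ_j β_j exp(−b_j/(η−ε))). Let (a*,b*) be any maximizer of F, set ν* = ν(b*), m = max_j |log(ν*_j/β_j)| and R_C = max_{i,j} C_{ij} − min_{i,j} C_{ij}. Then for all i, j: |a*_i + b*_j − C_{ij}| ≤ ε m + 2 R_C. -/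
open Real BigOperators Finset

/-- The primal measure recovered from the dual variable `b`: softmax of `−b/(η−ε)`
with prior `β`. -/
noncomputable def nuOf {J : ℕ} (β : Fin J → ℝ) (ε η : ℝ) (b : Fin J → ℝ) (j : Fin J) : ℝ :=
  β j * Real.exp (-b j / (η - ε)) / ∑ k, β k * Real.exp (-b k / (η - ε))

/-! At a maximizer the directional derivatives of `F` vanish. In terms of the density
`D_ij = exp ((a_i + b_j - C_ij) / ε)` they say that the plan `μ_i β_j D_ij` has marginals `μ`
and `ν*`: `∑_j β_j D_ij = 1` for every `i` and `∑_i μ_i D_ij = ν*_j / β_j` for every `j`.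
Comparing the first identity for two rows gives `a_i - a_i' ≤ R_C`. The second one is a
`μ`-average of `exp (residual / ε)` over column `j`, so some residual in that column is
`≤ ε log (ν*_j / β_j)` and some is `≥` it; moving from that row to row `i` changes the residual
by `(a_i - a_i') - (C_ij - C_i'j)`, at most `2 R_C` in absolute value. -/

theorem sum_mul_exp_pos {ι : Type*} [Fintype ι] [Nonempty ι] {w : ι → ℝ} (hw : ∀ i, 0 < w i)
    (x : ι → ℝ) : 0 < ∑ i, w i * Real.exp (x i) :=
  sum_pos (fun i _ => mul_pos (hw i) (Real.exp_pos _)) univ_nonempty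

theorem exists_le_of_sum_mul_exp_le {ι : Type*} [Fintype ι] [Nonempty ι] {w x y : ι → ℝ}
    (hw : ∀ i, 0 < w i) (h : ∑ i, w i * Real.exp (x i) ≤ ∑ i, w i * Real.exp (y i)) :
    ∃ i, x i ≤ y i :=
  let ⟨i, _, hi⟩ := exists_le_of_sum_le univ_nonempty h
  ⟨i, Real.exp_le_exp.1 (le_of_mul_le_mul_left hi (hw i))⟩

theorem sub_le_iSup_iSup_sub_iInf_iInf {ι κ : Type*} [Finite ι] [Finite κ] (C : ι → κ → ℝ)
    (i : ι) (j : κ) (i' : ι) (j' : κ) :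
    C i j - C i' j' ≤ (⨆ i, ⨆ j, C i j) - ⨅ i, ⨅ j, C i j :=
  sub_le_sub (le_ciSup_of_le (Finite.bddAbove_range _) i (le_ciSup (Finite.bddAbove_range _) j))
    (ciInf_le_of_le (Finite.bddBelow_range _) i' (ciInf_le (Finite.bddBelow_range _) j'))

theorem nuOf_pos {J : ℕ} [Nonempty (Fin J)] {β : Fin J → ℝ} (hβ : ∀ j, 0 < β j) (ε η : ℝ)
    (b : Fin J → ℝ) (j : Fin J) : 0 < nuOf β ε η b j :=
  div_pos (mul_pos (hβ j) (Real.exp_pos _)) (sum_mul_exp_pos hβ _)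

noncomputable def planDensity {ι κ : Type*} (C : ι → κ → ℝ) (ε : ℝ) (a : ι → ℝ) (b : κ → ℝ)
    (i : ι) (j : κ) : ℝ :=
  Real.exp ((a i + b j - C i j) / ε)

section Residuals

variable {ι κ : Type*} [Fintype κ] {μ : ι → ℝ} {β : κ → ℝ} {C : ι → κ → ℝ}
  {ε R : ℝ} {a : ι → ℝ} {b : κ → ℝ}

theorem sub_le_of_sum_mul_planDensity_eq [Nonempty κ] (hε : 0 < ε) (hβ : ∀ j, 0 < β j)
    {i i' : ι} (hC : ∀ j, C i j - C i' j ≤ R)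
    (h : ∑ j, β j * planDensity C ε a b i j = ∑ j, β j * planDensity C ε a b i' j) :
    a i - a i' ≤ R := by
  obtain ⟨j, hj⟩ := exists_le_of_sum_mul_exp_le hβ h.le
  rw [div_le_div_iff_of_pos_right hε] at hj
  linarith [hC j]

theorem abs_residual_le_of_marginals [Fintype ι] (hε : 0 < ε) (hμ : ∀ i, 0 < μ i)
    (hμsum : ∑ i, μ i = 1) (hβ : ∀ j, 0 < β j) (hC : ∀ i j i' j', C i j - C i' j' ≤ R)
    (hrow : ∀ i, ∑ j, β j * planDensity C ε a b i j = 1) (i : ι) (j : κ) {s : ℝ}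
    (hcol : ∑ i, μ i * planDensity C ε a b i j = Real.exp s) :
    |a i + b j - C i j| ≤ ε * |s| + 2 * R := by
  have : Nonempty ι := ⟨i⟩
  have : Nonempty κ := ⟨j⟩
  have ha : ∀ i i', a i - a i' ≤ R := fun i i' =>
    sub_le_of_sum_mul_planDensity_eq hε hβ (fun j => hC i j i' j) ((hrow i).trans (hrow i').symm)
  have hmean : ∑ i, μ i * Real.exp s = Real.exp s := by rw [← sum_mul, hμsum, one_mul]
  obtain ⟨i₁, h₁⟩ := exists_le_of_sum_mul_exp_le hμ (hcol.trans hmean.symm).le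
  obtain ⟨i₂, h₂⟩ := exists_le_of_sum_mul_exp_le hμ (hmean.trans hcol.symm).le
  rw [div_le_iff₀ hε] at h₁
  rw [le_div_iff₀ hε] at h₂
  have hs : -(ε * |s|) ≤ ε * s ∧ ε * s ≤ ε * |s| := abs_le.1 (by rw [abs_mul, abs_of_pos hε])
  rw [abs_le]
  constructor <;> linarith [ha i i₁, ha i₂ i, hC i₁ j i j, hC i j i₂ j]

end Residuals

theorem hasDerivAt_Fobj_add_smul {I J : ℕ} (μ : Fin I → ℝ) (β : Fin J → ℝ)
    (C : Fin I → Fin J → ℝ) {ε η : ℝ} (hε : ε ≠ 0) (hηε : η - ε ≠ 0)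
    (a da : Fin I → ℝ) (b db : Fin J → ℝ)
    (hZ : ∑ j, β j * Real.exp (-b j / (η - ε)) ≠ 0) :
    HasDerivAt (fun t : ℝ => Fobj μ β C ε η (a + t • da) (b + t • db))
      (∑ i, μ i * da i - ∑ i, ∑ j, μ i * β j * planDensity C ε a b i j * (da i + db j)
        + ∑ j, nuOf β ε η b j * db j) 0 := by
  have hlin : HasDerivAt (fun t : ℝ => ∑ i, μ i * (a i + t * da i)) (∑ i, μ i * da i) 0 :=
    .fun_sum fun i _ => by
      simpa using ((hasDerivAt_mul_const (da i)).const_add (a i)).const_mul (μ i)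
  have hexp : HasDerivAt (fun t : ℝ => ∑ i, ∑ j, μ i * β j *
      Real.exp ((a i + t * da i + (b j + t * db j) - C i j) / ε))
      (∑ i, ∑ j, μ i * β j * (planDensity C ε a b i j * ((da i + db j) / ε))) 0 := by
    refine .fun_sum fun i _ => .fun_sum fun j _ => ?_
    have hin : HasDerivAt (fun t : ℝ => (a i + t * da i + (b j + t * db j) - C i j) / ε)
        ((da i + db j) / ε) 0 := by
      simpa using ((((hasDerivAt_mul_const (da i)).const_add (a i)).add
        ((hasDerivAt_mul_const (db j)).const_add (b j))).sub_const (C i j)).div_const ε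
    simpa [planDensity] using hin.exp.const_mul (μ i * β j)
  have hZt : HasDerivAt (fun t : ℝ => ∑ j, β j * Real.exp (-(b j + t * db j) / (η - ε)))
      (∑ j, β j * (Real.exp (-b j / (η - ε)) * (-db j / (η - ε)))) 0 := by
    refine .fun_sum fun j _ => ?_
    have hin : HasDerivAt (fun t : ℝ => -(b j + t * db j) / (η - ε)) (-db j / (η - ε)) 0 := by
      simpa using (((hasDerivAt_mul_const (db j)).const_add (b j)).neg).div_const (η - ε)
    simpa using hin.exp.const_mul (β j)
  have := (hlin.sub (hexp.const_mul ε)).sub ((hZt.log (by simpa using hZ)).const_mul (η - ε))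
  refine this.congr_deriv ?_
  have hD : ε * ∑ i, ∑ j, μ i * β j * (planDensity C ε a b i j * ((da i + db j) / ε))
      = ∑ i, ∑ j, μ i * β j * planDensity C ε a b i j * (da i + db j) := by
    simp_rw [Finset.mul_sum]
    exact sum_congr rfl fun i _ => sum_congr rfl fun j _ => by field_simp
  have hν : (η - ε) * ((∑ j, β j * (rexp (-b j / (η - ε)) * (-db j / (η - ε))))
      / ∑ j, β j * rexp (-b j / (η - ε))) = -∑ j, nuOf β ε η b j * db j := by
    rw [Finset.sum_div, Finset.mul_sum, ← Finset.sum_neg_distrib]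
    exact sum_congr rfl fun j _ => by simp only [nuOf]; field_simp
  simp only [zero_mul, add_zero]
  rw [hD, hν]
  ring

section FirstOrderConditions

variable {I J : ℕ} {μ : Fin I → ℝ} {β : Fin J → ℝ} {C : Fin I → Fin J → ℝ} {ε η : ℝ}
  {astar : Fin I → ℝ} {bstar : Fin J → ℝ}

theorem directional_deriv_Fobj_eq_zero [Nonempty (Fin J)] (hε : 0 < ε) (hεη : ε < η)
    (hβ : ∀ j, 0 < β j) (hmax : ∀ a b, Fobj μ β C ε η a b ≤ Fobj μ β C ε η astar bstar)
    (da : Fin I → ℝ) (db : Fin J → ℝ) :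
    ∑ i, μ i * da i - ∑ i, ∑ j, μ i * β j * planDensity C ε astar bstar i j * (da i + db j)
      + ∑ j, nuOf β ε η bstar j * db j = 0 :=
  IsLocalMax.hasDerivAt_eq_zero (.of_forall fun t => by simpa using hmax _ _)
    (hasDerivAt_Fobj_add_smul μ β C hε.ne' (sub_pos.2 hεη).ne' astar da bstar db
      (sum_mul_exp_pos hβ _).ne')

theorem sum_mul_planDensity_eq_one [Nonempty (Fin J)] (hε : 0 < ε) (hεη : ε < η)
    (hβ : ∀ j, 0 < β j) (hmax : ∀ a b, Fobj μ β C ε η a b ≤ Fobj μ β C ε η astar bstar)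
    {i : Fin I} (hμ : μ i ≠ 0) : ∑ j, β j * planDensity C ε astar bstar i j = 1 := by
  have h := directional_deriv_Fobj_eq_zero hε hεη hβ hmax (Pi.single i 1) 0
  simp only [Pi.single_apply, mul_ite, mul_one, mul_zero, sum_ite_eq', mem_univ, ↓reduceIte,
    Pi.zero_apply, add_zero, sum_ite_irrel, sum_const_zero] at h
  simp only [mul_assoc, ← mul_sum, ← mul_one_sub, mul_eq_zero, hμ, false_or, sub_eq_zero] at h
  exact h.symm

theorem sum_mul_planDensity_eq_nuOf_div (hε : 0 < ε) (hεη : ε < η)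
    (hβ : ∀ j, 0 < β j) (hmax : ∀ a b, Fobj μ β C ε η a b ≤ Fobj μ β C ε η astar bstar)
    (j : Fin J) : ∑ i, μ i * planDensity C ε astar bstar i j = nuOf β ε η bstar j / β j := by
  have : Nonempty (Fin J) := ⟨j⟩
  have h := directional_deriv_Fobj_eq_zero hε hεη hβ hmax 0 (Pi.single j 1)
  simp only [Pi.zero_apply, mul_zero, sum_const_zero, Pi.single_apply, zero_add, mul_ite, mul_one,
    sum_ite_eq', mem_univ, ↓reduceIte, zero_sub] at h
  rw [eq_div_iff (hβ j).ne', sum_mul]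
  simp only [mul_right_comm _ _ (β j)]
  linarith

end FirstOrderConditions

theorem dual_solution_residual_bound_general (I J : ℕ)
    (μ : Fin I → ℝ) (hμpos : ∀ i, 0 < μ i) (hμsum : ∑ i, μ i = 1)
    (β : Fin J → ℝ) (hβpos : ∀ j, 0 < β j)
    (C : Fin I → Fin J → ℝ) (ε η : ℝ) (hε : 0 < ε) (hεη : ε < η)
    (astar : Fin I → ℝ) (bstar : Fin J → ℝ)
    (hmax : ∀ (a : Fin I → ℝ) (b : Fin J → ℝ),
      Fobj μ β C ε η a b ≤ Fobj μ β C ε η astar bstar)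
    (νstar : Fin J → ℝ) (hν : νstar = nuOf β ε η bstar)
    (m : ℝ) (hm : m = ⨆ j, |Real.log (νstar j / β j)|)
    (RC : ℝ) (hRC : RC = (⨆ i, ⨆ j, C i j) - ⨅ i, ⨅ j, C i j) :
    ∀ i j, |astar i + bstar j - C i j| ≤ ε * m + 2 * RC := by
  intro i j
  subst hν hm hRC
  have : Nonempty (Fin J) := ⟨j⟩
  set s := Real.log (nuOf β ε η bstar j / β j)
  have hcol : ∑ i, μ i * planDensity C ε astar bstar i j = Real.exp s := by
    rw [Real.exp_log (div_pos (nuOf_pos hβpos ε η bstar j) (hβpos j))]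
    exact sum_mul_planDensity_eq_nuOf_div hε hεη hβpos hmax j
  calc |astar i + bstar j - C i j| ≤ ε * |s| + 2 * ((⨆ i, ⨆ j, C i j) - ⨅ i, ⨅ j, C i j) :=
        abs_residual_le_of_marginals hε hμpos hμsum hβpos (sub_le_iSup_iSup_sub_iInf_iInf C)
          (fun i => sum_mul_planDensity_eq_one hε hεη hβpos hmax (hμpos i).ne') i j hcol
    _ ≤ _ := by
        gcongr
        exact le_ciSup (f := fun j => |Real.log (nuOf β ε η bstar j / β j)|)
          (Finite.bddAbove_range _) j

/-- **bound on the dual residuals.** Any maximizer `(a*, b*)` of `F`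
satisfies `|a*_i + b*_j − C_{ij}| ≤ ε m + 2 R_C` for all `i, j`, where
`m = max_j |log(ν*_j/β_j)|` and `R_C = max C − min C`. -/
theorem dual_solution_residual_bound (I J : ℕ) (hI : 1 ≤ I) (hJ : 1 ≤ J)
    (μ : Fin I → ℝ) (hμpos : ∀ i, 0 < μ i) (hμsum : ∑ i, μ i = 1)
    (β : Fin J → ℝ) (hβpos : ∀ j, 0 < β j) (hβsum : ∑ j, β j = 1)
    (C : Fin I → Fin J → ℝ) (ε η : ℝ) (hε : 0 < ε) (hεη : ε < η)
    (astar : Fin I → ℝ) (bstar : Fin J → ℝ)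
    (hmax : ∀ (a : Fin I → ℝ) (b : Fin J → ℝ),
      Fobj μ β C ε η a b ≤ Fobj μ β C ε η astar bstar)
    (νstar : Fin J → ℝ) (hν : νstar = nuOf β ε η bstar)
    (m : ℝ) (hm : m = ⨆ j, |Real.log (νstar j / β j)|)
    (RC : ℝ) (hRC : RC = (⨆ i, ⨆ j, C i j) - ⨅ i, ⨅ j, C i j) :
    ∀ i j, |astar i + bstar j - C i j| ≤ ε * m + 2 * RC :=
  dual_solution_residual_bound_general I J μ hμpos hμsum β hβpos C ε η hε hεη astar bstar hmax νstar
    hν m hm RC hRC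
end

section
/- Let I, J ≥ 1 be integers, let μ ∈ ℝ^I and β ∈ ℝ^J be probability vectors with all entries strictly positive, let C ∈ ℝ^{I×J}, and let ε > 0, η > ε. Define F(a,b) = Σ_i μ_i a_i − ε Σ_{i,j} μ_i β_j exp((a_i + b_j − C_{ij})/ε) − (η−ε) log(Σ_j β_j exp(−b_j/(η−ε))) for (a,b) ∈ ℝ^I × ℝ^J. Let B ≥ 0, and define λ = (min_{i,j}{μ_i, β_j} / ε) · exp(−B/ε). Let K be the convex set of points (a,b) ∈ ℝ^I × ℝ^J such that a_i + b_j − C_{ij} ≥ −B for all i, j, and Σ_i μ_i a_i = Σ_j β_j b_j. Then −F is λ-strongly convex on K: for all (a,b), (a',b') ∈ K and all t ∈ [0,1], F(t(a,b) + (1−t)(a',b')) ≥ t F(a,b) + (1−t) F(a',b') + (λ/2) t(1−t) (‖a−a'‖² + ‖b−b'‖²), where ‖·‖ is the Euclidean norm. -/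
/-!
On `[c, ∞)` the exponential has second derivative at least `exp c`, so each entropic term
`ε exp ((a_i + b_j - C_ij) / ε)` is `exp (-B / ε) / ε`-strongly convex in the residual
`a_i + b_j - C_ij` on the region where residuals are at least `-B`. Summing with weights
`μ_i β_j`, the quadratic form `∑ μ_i β_j (u_i + v_j)²` equals
`∑ μ_i u_i² + ∑ β_j v_j² + 2 (∑ μ_i u_i)(∑ β_j v_j)`, and on the slice the cross term is a
square, so the form dominates `min (μ, β) (‖u‖² + ‖v‖²)`. The remaining parts of `F` are a
linear term and `-(η - ε)` times a log-sum-exp, which is convex by Hölder's inequality.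
-/

open Real BigOperators Finset

theorem strongConvexOn_exp_Ici (c : ℝ) : StrongConvexOn (Set.Ici c) (exp c) exp := by
  rw [strongConvexOn_iff_convex]
  simp only [Real.norm_eq_abs, sq_abs]
  refine convexOn_of_hasDerivWithinAt2_nonneg (convex_Ici c) (by fun_prop)
    (f' := fun x => exp x - exp c * x) (f'' := fun x => exp x - exp c) ?_ ?_ ?_
  · intro x _
    refine ((hasDerivAt_exp x).sub ?_).hasDerivWithinAt
    exact ((hasDerivAt_pow 2 x).const_mul (exp c / 2)).congr_deriv (by ring)
  · intro x _
    refine ((hasDerivAt_exp x).sub ?_).hasDerivWithinAt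
    simpa using (hasDerivAt_id x).const_mul (exp c)
  · intro x hx
    rw [interior_Ici] at hx
    exact sub_nonneg.2 (exp_le_exp.2 (le_of_lt hx))

theorem strongConvexOn_const_mul_exp_div_Ici (c : ℝ) {ε : ℝ} (hε : 0 < ε) :
    StrongConvexOn (Set.Ici c) (exp (c / ε) / ε) (fun s => ε * exp (s / ε)) := by
  refine ⟨convex_Ici c, fun x hx y hy a b ha hb hab => ?_⟩
  have hx' : c / ε ≤ x / ε := div_le_div_of_nonneg_right hx hε.le
  have hy' : c / ε ≤ y / ε := div_le_div_of_nonneg_right hy hε.le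
  have h := (strongConvexOn_exp_Ici (c / ε)).2 hx' hy' ha hb hab
  simp only [smul_eq_mul, Real.norm_eq_abs, sq_abs] at h ⊢
  have hmid : (a * x + b * y) / ε = a * (x / ε) + b * (y / ε) := by ring
  calc ε * exp ((a * x + b * y) / ε) = ε * exp (a * (x / ε) + b * (y / ε)) := by rw [hmid]
    _ ≤ ε * (a * exp (x / ε) + b * exp (y / ε) - a * b * (exp (c / ε) / 2 * (x / ε - y / ε) ^ 2)) :=
        mul_le_mul_of_nonneg_left h hε.le
    _ = _ := by field_simp

theorem StrongConvexOn.sum_mul_le {κ : Type*} [Fintype κ] {s : Set ℝ} {m : ℝ} {f : ℝ → ℝ}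
    (hf : StrongConvexOn s m f) (w : κ → ℝ) (hw : ∀ k, 0 ≤ w k) {x y : κ → ℝ}
    (hx : ∀ k, x k ∈ s) (hy : ∀ k, y k ∈ s) {a b : ℝ} (ha : 0 ≤ a) (hb : 0 ≤ b) (hab : a + b = 1) :
    ∑ k, w k * f (a * x k + b * y k) ≤
      a * ∑ k, w k * f (x k) + b * ∑ k, w k * f (y k) -
        a * b * (m / 2) * ∑ k, w k * (x k - y k) ^ 2 := by
  have hterm (k : κ) : w k * f (a * x k + b * y k) ≤
      a * (w k * f (x k)) + b * (w k * f (y k)) - a * b * (m / 2) * (w k * (x k - y k) ^ 2) := by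
    have h := mul_le_mul_of_nonneg_left (hf.2 (hx k) (hy k) ha hb hab) (hw k)
    simp only [smul_eq_mul, Real.norm_eq_abs, sq_abs] at h
    linarith
  simpa only [mul_sum, sum_add_distrib, sum_sub_distrib] using sum_le_sum fun k _ => hterm k

theorem convexOn_log_sum_mul_exp {ι : Type*} [Fintype ι] (β : ι → ℝ) (hβ : ∀ j, 0 < β j) :
    ConvexOn ℝ Set.univ (fun y : ι → ℝ => log (∑ j, β j * exp (y j))) := by
  rcases isEmpty_or_nonempty ι with hι | hι
  · simpa using convexOn_const (log 0) (convex_univ (𝕜 := ℝ) (E := ι → ℝ))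
  refine convexOn_iff_forall_pos.2 ⟨convex_univ, fun y _ y' _ a b ha hb hab => ?_⟩
  have hpos (z : ι → ℝ) : 0 < ∑ j, β j * exp (z j) :=
    sum_pos (fun j _ => mul_pos (hβ j) (exp_pos _)) univ_nonempty
  have hsplit (j : ι) : β j * exp (a * y j + b * y' j) =
      (β j * exp (y j)) ^ a * (β j * exp (y' j)) ^ b := by
    rw [mul_rpow (hβ j).le (exp_pos _).le, mul_rpow (hβ j).le (exp_pos _).le, ← exp_mul,
      ← exp_mul, mul_mul_mul_comm, ← rpow_add (hβ j), hab, rpow_one, ← exp_add]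
    ring_nf
  have holder : ∑ j, β j * exp (a * y j + b * y' j) ≤
      (∑ j, β j * exp (y j)) ^ a * (∑ j, β j * exp (y' j)) ^ b := by
    have hnn (z : ι → ℝ) (j : ι) : 0 ≤ β j * exp (z j) := (mul_pos (hβ j) (exp_pos _)).le
    rw [sum_congr rfl fun j _ => hsplit j]
    convert inner_le_Lp_mul_Lq_of_nonneg univ (HolderConjugate.inv_inv ha hb hab)
      (fun j _ => rpow_nonneg (hnn y j) a) (fun j _ => rpow_nonneg (hnn y' j) b) using 3 <;>
    simp [rpow_rpow_inv (hnn _ _), ha.ne', hb.ne']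
  simp only [Pi.add_apply, Pi.smul_apply, smul_eq_mul]
  calc log (∑ j, β j * exp (a * y j + b * y' j))
      ≤ log ((∑ j, β j * exp (y j)) ^ a * (∑ j, β j * exp (y' j)) ^ b) :=
        log_le_log (hpos _) holder
    _ = a * log (∑ j, β j * exp (y j)) + b * log (∑ j, β j * exp (y' j)) := by
        rw [log_mul (rpow_pos_of_pos (hpos y) a).ne' (rpow_pos_of_pos (hpos y') b).ne',
          log_rpow (hpos y), log_rpow (hpos y')]

section Quadratic

variable {ι κ : Type*} [Fintype ι] [Fintype κ] {μ : ι → ℝ} {β : κ → ℝ}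

theorem sum_sum_mul_mul_add_sq (hμ : ∑ i, μ i = 1) (hβ : ∑ j, β j = 1) (u : ι → ℝ) (v : κ → ℝ) :
    ∑ i, ∑ j, μ i * β j * (u i + v j) ^ 2 =
      ∑ i, μ i * u i ^ 2 + ∑ j, β j * v j ^ 2 + 2 * (∑ i, μ i * u i) * ∑ j, β j * v j := by
  have hexpand (i : ι) (j : κ) : μ i * β j * (u i + v j) ^ 2 =
      μ i * u i ^ 2 * β j + μ i * (β j * v j ^ 2) + 2 * (μ i * u i) * (β j * v j) := by ring
  simp only [hexpand, sum_add_distrib, ← mul_sum, ← sum_mul, hβ, hμ]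
  ring

theorem mul_sum_sq_add_sum_sq_le_sum_sum_mul_mul_add_sq (hμ : ∑ i, μ i = 1) (hβ : ∑ j, β j = 1)
    {m : ℝ} (hmμ : ∀ i, m ≤ μ i) (hmβ : ∀ j, m ≤ β j) {u : ι → ℝ} {v : κ → ℝ}
    (huv : ∑ i, μ i * u i = ∑ j, β j * v j) :
    m * (∑ i, u i ^ 2 + ∑ j, v j ^ 2) ≤ ∑ i, ∑ j, μ i * β j * (u i + v j) ^ 2 := by
  have hu : m * ∑ i, u i ^ 2 ≤ ∑ i, μ i * u i ^ 2 := by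
    rw [mul_sum]; exact sum_le_sum fun i _ => mul_le_mul_of_nonneg_right (hmμ i) (sq_nonneg _)
  have hv : m * ∑ j, v j ^ 2 ≤ ∑ j, β j * v j ^ 2 := by
    rw [mul_sum]; exact sum_le_sum fun j _ => mul_le_mul_of_nonneg_right (hmβ j) (sq_nonneg _)
  have hcross : 0 ≤ 2 * (∑ i, μ i * u i) * ∑ j, β j * v j := by
    rw [huv, mul_assoc]; exact mul_nonneg zero_le_two (mul_self_nonneg _)
  rw [sum_sum_mul_mul_add_sq hμ hβ]
  linarith

end Quadratic

theorem entropic_term_strongConvex_on_slice {ι κ : Type*} [Fintype ι] [Fintype κ]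
    {μ : ι → ℝ} {β : κ → ℝ} (hμ₀ : ∀ i, 0 ≤ μ i) (hβ₀ : ∀ j, 0 ≤ β j)
    (hμ : ∑ i, μ i = 1) (hβ : ∑ j, β j = 1) {m : ℝ} (hmμ : ∀ i, m ≤ μ i) (hmβ : ∀ j, m ≤ β j)
    (C : ι → κ → ℝ) {ε : ℝ} (hε : 0 < ε) (B : ℝ) {a a' : ι → ℝ} {b b' : κ → ℝ}
    (hab : ∀ i j, -B ≤ a i + b j - C i j) (hsum : ∑ i, μ i * a i = ∑ j, β j * b j)
    (hab' : ∀ i j, -B ≤ a' i + b' j - C i j) (hsum' : ∑ i, μ i * a' i = ∑ j, β j * b' j)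
    {t : ℝ} (ht : 0 ≤ t) (ht' : t ≤ 1) :
    ε * ∑ i, ∑ j, μ i * β j *
        exp ((t * a i + (1 - t) * a' i + (t * b j + (1 - t) * b' j) - C i j) / ε) ≤
      t * (ε * ∑ i, ∑ j, μ i * β j * exp ((a i + b j - C i j) / ε)) +
        (1 - t) * (ε * ∑ i, ∑ j, μ i * β j * exp ((a' i + b' j - C i j) / ε)) -
        m * exp (-B / ε) / ε / 2 * t * (1 - t) *
          (∑ i, (a i - a' i) ^ 2 + ∑ j, (b j - b' j) ^ 2) := by
  have hexp := (strongConvexOn_const_mul_exp_div_Ici (-B) hε).sum_mul_le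
    (fun p : ι × κ => μ p.1 * β p.2) (fun p => mul_nonneg (hμ₀ p.1) (hβ₀ p.2))
    (x := fun p => a p.1 + b p.2 - C p.1 p.2) (y := fun p => a' p.1 + b' p.2 - C p.1 p.2)
    (fun p => hab p.1 p.2) (fun p => hab' p.1 p.2) ht (sub_nonneg.2 ht') (add_sub_cancel t 1)
  have hquad := mul_sum_sq_add_sum_sq_le_sum_sum_mul_mul_add_sq hμ hβ hmμ hmβ
    (u := a - a') (v := b - b') (by simp only [Pi.sub_apply, mul_sub, sum_sub_distrib, hsum, hsum'])
  have hmid (i : ι) (j : κ) : t * (a i + b j - C i j) + (1 - t) * (a' i + b' j - C i j) =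
      t * a i + (1 - t) * a' i + (t * b j + (1 - t) * b' j) - C i j := by ring
  have hdiff (i : ι) (j : κ) :
      a i + b j - C i j - (a' i + b' j - C i j) = (a - a') i + (b - b') j := by
    simp only [Pi.sub_apply]; ring
  simp only [Fintype.sum_prod_type, hmid, hdiff, mul_left_comm _ ε, ← mul_sum] at hexp
  simp only [Pi.sub_apply] at hquad hexp
  have hfac : 0 ≤ t * (1 - t) * (exp (-B / ε) / ε / 2) := by
    have := sub_nonneg.2 ht'; positivity
  have := mul_le_mul_of_nonneg_left hquad hfac
  linear_combination hexp + this

theorem neg_dual_objective_strongly_convex_general (I J : ℕ)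
    (μ : Fin I → ℝ) (hμpos : ∀ i, 0 < μ i) (hμsum : ∑ i, μ i = 1)
    (β : Fin J → ℝ) (hβpos : ∀ j, 0 < β j) (hβsum : ∑ j, β j = 1)
    (C : Fin I → Fin J → ℝ) (ε η : ℝ) (hε : 0 < ε) (hεη : ε < η)
    (B : ℝ)
    (lam : ℝ) (hlam : lam = min (⨅ i, μ i) (⨅ j, β j) / ε * Real.exp (-B / ε)) :
    ∀ (a : Fin I → ℝ) (b : Fin J → ℝ) (a' : Fin I → ℝ) (b' : Fin J → ℝ),
      (∀ i j, -B ≤ a i + b j - C i j) → (∑ i, μ i * a i = ∑ j, β j * b j) →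
      (∀ i j, -B ≤ a' i + b' j - C i j) → (∑ i, μ i * a' i = ∑ j, β j * b' j) →
      ∀ t : ℝ, 0 ≤ t → t ≤ 1 →
        Fobj μ β C ε η (fun i => t * a i + (1 - t) * a' i)
            (fun j => t * b j + (1 - t) * b' j) ≥
          t * Fobj μ β C ε η a b + (1 - t) * Fobj μ β C ε η a' b' +
            lam / 2 * t * (1 - t) *
              (∑ i, (a i - a' i) ^ 2 + ∑ j, (b j - b' j) ^ 2) := by
  intro a b a' b' hab hsum hab' hsum' t ht ht'
  have hentropic := entropic_term_strongConvex_on_slice (fun i => (hμpos i).le)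
    (fun j => (hβpos j).le) hμsum hβsum
    (fun i => (min_le_left _ _).trans (ciInf_le (Finite.bddBelow_range μ) i))
    (fun j => (min_le_right _ _).trans (ciInf_le (Finite.bddBelow_range β) j))
    C hε B hab hsum hab' hsum' ht ht'
  have hmid : (t • fun j => -b j / (η - ε)) + (1 - t) • (fun j => -b' j / (η - ε)) =
      fun j => -(t * b j + (1 - t) * b' j) / (η - ε) := by
    ext j; simp only [Pi.add_apply, Pi.smul_apply, smul_eq_mul]; ring
  have hlse := (convexOn_log_sum_mul_exp β hβpos).2 (Set.mem_univ fun j => -b j / (η - ε))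
    (Set.mem_univ fun j => -b' j / (η - ε)) ht (sub_nonneg.2 ht') (add_sub_cancel t 1)
  rw [hmid] at hlse
  simp only [smul_eq_mul] at hlse
  have hlin : ∑ i, μ i * (t * a i + (1 - t) * a' i) =
      t * ∑ i, μ i * a i + (1 - t) * ∑ i, μ i * a' i := by
    simp only [mul_add, sum_add_distrib, mul_sum, mul_left_comm]
  rw [Fobj, Fobj, Fobj, hlin, hlam]
  linear_combination hentropic + mul_le_mul_of_nonneg_left hlse (sub_nonneg.2 hεη.le)

/-- **strong concavity on the slice.** On the set of `(a, b)` with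
`a_i + b_j − C_{ij} ≥ −B` and `∑ μ_i a_i = ∑ β_j b_j`, the function `−F` is
`λ`-strongly convex with `λ = (min{μ_i, β_j}/ε) e^{−B/ε}` (Euclidean norm). -/
theorem neg_dual_objective_strongly_convex (I J : ℕ) (hI : 1 ≤ I) (hJ : 1 ≤ J)
    (μ : Fin I → ℝ) (hμpos : ∀ i, 0 < μ i) (hμsum : ∑ i, μ i = 1)
    (β : Fin J → ℝ) (hβpos : ∀ j, 0 < β j) (hβsum : ∑ j, β j = 1)
    (C : Fin I → Fin J → ℝ) (ε η : ℝ) (hε : 0 < ε) (hεη : ε < η)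
    (B : ℝ) (hB : 0 ≤ B)
    (lam : ℝ) (hlam : lam = min (⨅ i, μ i) (⨅ j, β j) / ε * Real.exp (-B / ε)) :
    ∀ (a : Fin I → ℝ) (b : Fin J → ℝ) (a' : Fin I → ℝ) (b' : Fin J → ℝ),
      (∀ i j, -B ≤ a i + b j - C i j) → (∑ i, μ i * a i = ∑ j, β j * b j) →
      (∀ i j, -B ≤ a' i + b' j - C i j) → (∑ i, μ i * a' i = ∑ j, β j * b' j) →
      ∀ t : ℝ, 0 ≤ t → t ≤ 1 →
        Fobj μ β C ε η (fun i => t * a i + (1 - t) * a' i)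
            (fun j => t * b j + (1 - t) * b' j) ≥
          t * Fobj μ β C ε η a b + (1 - t) * Fobj μ β C ε η a' b' +
            lam / 2 * t * (1 - t) *
              (∑ i, (a i - a' i) ^ 2 + ∑ j, (b j - b' j) ^ 2) :=
  neg_dual_objective_strongly_convex_general I J μ hμpos hμsum β hβpos hβsum C ε η hε hεη B lam hlam
end

section
/- Let J ≥ 1 be an integer, let β ∈ ℝ^J be a probability vector with all entries strictly positive, let ε > 0, η > ε, and define ν(b)_j = β_j exp(−b_j/(η−ε)) / Σ_k β_k exp(−b_k/(η−ε)) for b ∈ ℝ^J. Then for all b, b' ∈ ℝ^J: KL(ν(b'), ν(b)) ≤ ‖b − b'‖² / (2(η−ε)²), where ‖·‖ is the Euclidean norm and KL(p,q) = Σ_j p_j log(p_j/q_j). -/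
/-!
With `p = ν(b')` and `u = (b' - b)/(η - ε)`, the measure `ν(b)` is the exponential tilt of `p`
by `u`, so `KL(ν(b'), ν(b)) = log E_p[e^u] - E_p[u]` is the cumulant generating function of
`u - E_p[u]` at `1`. As `|u_j| ≤ ‖u‖₂`, Hoeffding's lemma on `[-‖u‖₂, ‖u‖₂]` bounds it by
`‖u‖₂² / 2`.
-/

open Real BigOperators Finset

section Softmax

variable {ι : Type*} [Fintype ι]

noncomputable def softmax (β x : ι → ℝ) (i : ι) : ℝ :=
  β i * exp (x i) / ∑ k, β k * exp (x k)

theorem sum_mul_exp_pos_s12 {p : ι → ℝ} (hp0 : ∀ i, 0 ≤ p i) (hp1 : ∑ i, p i = 1) (u : ι → ℝ) :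
    0 < ∑ i, p i * exp (u i) := by
  obtain ⟨i, -, hi⟩ := exists_lt_of_sum_lt (s := univ) (f := 0) (g := p) (by simp [hp1])
  exact sum_pos' (fun j _ ↦ mul_nonneg (hp0 j) (exp_pos _).le)
    ⟨i, mem_univ i, mul_pos hi (exp_pos _)⟩

theorem softmax_nonneg {β : ι → ℝ} (hβ : ∀ i, 0 ≤ β i) (x : ι → ℝ) (i : ι) :
    0 ≤ softmax β x i :=
  div_nonneg (mul_nonneg (hβ i) (exp_pos _).le)
    (sum_nonneg fun k _ ↦ mul_nonneg (hβ k) (exp_pos _).le)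

theorem sum_softmax {β x : ι → ℝ} (h : ∑ k, β k * exp (x k) ≠ 0) :
    ∑ i, softmax β x i = 1 := by
  simp only [softmax]
  rw [← sum_div, div_self h]

theorem softmax_softmax {β y : ι → ℝ} (h : ∑ k, β k * exp (y k) ≠ 0) (u : ι → ℝ) :
    softmax (softmax β y) u = softmax β (y + u) := by
  ext i
  simp only [softmax, Pi.add_apply, exp_add, div_mul_eq_mul_div, ← sum_div, mul_assoc]
  rw [div_div_div_cancel_right₀ h]

theorem sum_mul_log_div_softmax {p : ι → ℝ} (hp0 : ∀ i, 0 ≤ p i) (hp1 : ∑ i, p i = 1)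
    (u : ι → ℝ) :
    ∑ i, p i * log (p i / softmax p u i) = log (∑ i, p i * exp (u i)) - ∑ i, p i * u i := by
  have hS := (sum_mul_exp_pos_s12 hp0 hp1 u).ne'
  have term (i : ι) :
      p i * log (p i / softmax p u i) = p i * log (∑ k, p k * exp (u k)) - p i * u i := by
    rcases (hp0 i).eq_or_lt with hi | hi
    · simp [← hi]
    rw [softmax, div_div_eq_mul_div, mul_div_mul_left _ _ hi.ne', log_div hS (exp_ne_zero _),
      log_exp, mul_sub]
  rw [sum_congr rfl fun i _ ↦ term i, sum_sub_distrib, ← sum_mul, hp1, one_mul]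

open ProbabilityTheory MeasureTheory in
theorem log_sum_mul_exp_le {p : ι → ℝ} (hp0 : ∀ i, 0 ≤ p i) (hp1 : ∑ i, p i = 1)
    (u : ι → ℝ) :
    log (∑ i, p i * exp (u i)) ≤ ∑ i, p i * u i + (∑ i, u i ^ 2) / 2 := by
  let _ : MeasurableSpace ι := ⊤
  let μ : PMF ι := PMF.ofFintype (fun i ↦ ENNReal.ofReal (p i)) <| by
    rw [← ENNReal.ofReal_sum_of_nonneg fun i _ ↦ hp0 i, hp1, ENNReal.ofReal_one]
  have integral_eq (f : ι → ℝ) : ∫ i, f i ∂μ.toMeasure = ∑ i, p i * f i := by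
    simp [PMF.integral_eq_sum, μ, ENNReal.toReal_ofReal (hp0 _)]
  set R := √(∑ i, u i ^ 2) with hR
  have hu (i : ι) : u i ∈ Set.Icc (-R) R :=
    abs_le.1 <| abs_le_sqrt (single_le_sum (fun j _ ↦ sq_nonneg (u j)) (mem_univ i))
  have hcgf := (hasSubgaussianMGF_of_mem_Icc (μ := μ.toMeasure) (X := u)
    (measurable_of_countable u).aemeasurable (ae_of_all _ hu)).cgf_le 1
  have hc : (((‖R - -R‖₊ / 2) ^ 2 : NNReal) : ℝ) = ∑ i, u i ^ 2 := by
    push_cast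
    rw [sub_neg_eq_add, ← two_mul, norm_of_nonneg (by positivity),
      mul_div_cancel_left₀ _ two_ne_zero, hR, sq_sqrt (sum_nonneg fun i _ ↦ sq_nonneg _)]
  rw [cgf, mgf, integral_eq, integral_eq, hc] at hcgf
  simp only [one_mul, exp_sub, ← mul_div_assoc, ← sum_div] at hcgf
  rw [log_div (sum_mul_exp_pos_s12 hp0 hp1 u).ne' (exp_ne_zero _), log_exp] at hcgf
  linarith

theorem kl_softmax_le [Nonempty ι] {β : ι → ℝ} (hβ : ∀ i, 0 < β i) (x y : ι → ℝ) :
    ∑ i, softmax β y i * log (softmax β y i / softmax β x i) ≤ (∑ i, (x i - y i) ^ 2) / 2 := by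
  have hZ : ∑ k, β k * exp (y k) ≠ 0 :=
    (sum_pos (fun k _ ↦ mul_pos (hβ k) (exp_pos _)) univ_nonempty).ne'
  have hp0 := softmax_nonneg (fun i ↦ (hβ i).le) y
  have hp1 := sum_softmax hZ
  have hx : softmax β x = softmax (softmax β y) (x - y) := by
    rw [softmax_softmax hZ, add_sub_cancel]
  rw [hx, sum_mul_log_div_softmax hp0 hp1]
  exact sub_le_iff_le_add'.2 (log_sum_mul_exp_le hp0 hp1 (x - y))

end Softmax

theorem kl_softmax_quadratic_bound_general (J : ℕ) (hJ : 1 ≤ J)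
    (β : Fin J → ℝ) (hβpos : ∀ j, 0 < β j)
    (ε η : ℝ) :
    ∀ b b' : Fin J → ℝ,
      ∑ j, nuOf β ε η b' j * Real.log (nuOf β ε η b' j / nuOf β ε η b j) ≤
        (∑ j, (b j - b' j) ^ 2) / (2 * (η - ε) ^ 2) := by
  intro b b'
  have : Nonempty (Fin J) := ⟨⟨0, hJ⟩⟩
  have hν (c : Fin J → ℝ) : nuOf β ε η c = softmax β fun j ↦ -c j / (η - ε) := rfl
  calc _ ≤ (∑ j, (-b j / (η - ε) - -b' j / (η - ε)) ^ 2) / 2 := by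
        simpa only [hν] using kl_softmax_le hβpos _ _
    _ = (∑ j, (b j - b' j) ^ 2) / (2 * (η - ε) ^ 2) := by
        generalize η - ε = τ
        simp only [sum_div]
        exact sum_congr rfl fun j _ ↦ by ring

/-- **quadratic KL bound between softmax measures.**
`KL(ν(b'), ν(b)) ≤ ‖b − b'‖² / (2(η−ε)²)` for the Euclidean norm. -/
theorem kl_softmax_quadratic_bound (J : ℕ) (hJ : 1 ≤ J)
    (β : Fin J → ℝ) (hβpos : ∀ j, 0 < β j) (hβsum : ∑ j, β j = 1)
    (ε η : ℝ) (hε : 0 < ε) (hεη : ε < η) :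
    ∀ b b' : Fin J → ℝ,
      ∑ j, nuOf β ε η b' j * Real.log (nuOf β ε η b' j / nuOf β ε η b j) ≤
        (∑ j, (b j - b' j) ^ 2) / (2 * (η - ε) ^ 2) :=
  kl_softmax_quadratic_bound_general J hJ β hβpos ε η
end
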